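/- For any dual-feasible (λ, σ) and any primal-feasible impulse set {v_{kj}} (with t_{kj} ∈ T_k), equality of the dual objective and primal cost, λᵀb − Σₖ ΔV_kσ_k = Σₖ Σⱼ f_k(v_{kj}), implies: (i) every impulse occurs at a time where the dual norm constraint is active and aligned, i.e., v_{kj}ᵀ M_k(t_{kj}) λ = (1+σ_k) f_k(v_{kj}) for all k, j, and (ii) σ_k (Σⱼ f_k(v_{kj}) − ΔV_k) = 0 for all k. -/

import Mathlib

open scoped BigOperators

/-- Dual norm: `f°(y) = sup {xᵀy : f(x) ≤ 1}`. -/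
noncomputable def dualNorm {n : ℕ} (f : (Fin n → ℝ) → ℝ) (y : Fin n → ℝ) : ℝ :=
  sSup ((fun x : Fin n → ℝ => ∑ i, x i * y i) '' {x | f x ≤ 1})

/-!
Weak duality is a chain of two inequalities: by Hölder and dual feasibility each impulse
satisfies `vᵀ M(t) λ ≤ (1 + σ_k) f_k(v)`, and by primal feasibility
`σ_k Σⱼ f_k(v_{kj}) ≤ σ_k ΔV_k`. Summing, `λᵀ b ≤ Σₖ Σⱼ f_k(v_{kj}) + Σₖ ΔV_k σ_k`.
A zero duality gap forces equality in every summand of both inequalities, which is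
exactly alignment (i) and complementary slackness (ii).
-/

open Matrix

theorem Finset.eq_and_eq_of_sum_eq_of_le_of_le {ι M : Type*} [AddCommMonoid M] [PartialOrder M]
    [IsOrderedCancelAddMonoid M] {s : Finset ι} {a b c : ι → M}
    (hab : ∀ i ∈ s, a i ≤ b i) (hbc : ∀ i ∈ s, b i ≤ c i)
    (h : ∑ i ∈ s, a i = ∑ i ∈ s, c i) : ∀ i ∈ s, a i = b i ∧ b i = c i := by
  intro i hi
  have hac : a i = c i :=
    (Finset.sum_eq_sum_iff_of_le fun j hj => (hab j hj).trans (hbc j hj)).1 h i hi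
  exact ⟨(hab i hi).antisymm (hac ▸ hbc i hi), (hbc i hi).antisymm (hac ▸ hab i hi)⟩

theorem dotProduct_le_mul_of_dualNorm_le {n : ℕ} {f : (Fin n → ℝ) → ℝ} {v y : Fin n → ℝ}
    {c : ℝ} (hv : 0 ≤ f v) (hHolder : v ⬝ᵥ y ≤ f v * dualNorm f y) (hy : dualNorm f y ≤ c) :
    v ⬝ᵥ y ≤ c * f v :=
  calc v ⬝ᵥ y ≤ f v * dualNorm f y := hHolder
    _ ≤ f v * c := mul_le_mul_of_nonneg_left hy hv
    _ = c * f v := mul_comm _ _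

theorem strong_duality_alignment_general
    {nx nu N : ℕ}
    (b : Fin nx → ℝ)
    (T : Fin N → Set ℝ)
    (M : Fin N → ℝ → Matrix (Fin nu) (Fin nx) ℝ)
    (f : Fin N → ((Fin nu → ℝ) → ℝ))
    (hnonneg : ∀ k u, 0 ≤ f k u)
    -- Hölder inequality for each norm and its dual
    (hHolder : ∀ k (v y : Fin nu → ℝ),
      ∑ i, v i * y i ≤ f k v * dualNorm (f k) y)
    (ΔV : Fin N → ℝ)
    -- dual-feasible point
    (lam : Fin nx → ℝ) (σ : Fin N → ℝ) (hσ : ∀ k, 0 ≤ σ k)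
    (hdual : ∀ k, ∀ t ∈ T k,
      dualNorm (f k) ((M k t).mulVec lam) ≤ 1 + σ k)
    -- primal-feasible impulse set
    (m : Fin N → ℕ)
    (t : (k : Fin N) → Fin (m k) → ℝ) (ht : ∀ k j, t k j ∈ T k)
    (v : (k : Fin N) → Fin (m k) → (Fin nu → ℝ))
    (hbudget : ∀ k, ∑ j, f k (v k j) ≤ ΔV k)
    (hb : b = ∑ k, ∑ j, (M k (t k j)).transpose.mulVec (v k j))
    -- equality of dual objective and primal cost
    (heq : (∑ i, lam i * b i) - ∑ k, ΔV k * σ k = ∑ k, ∑ j, f k (v k j)) :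
    (∀ k j, ∑ i, v k j i * (M k (t k j)).mulVec lam i =
      (1 + σ k) * f k (v k j)) ∧
    (∀ k, σ k * ((∑ j, f k (v k j)) - ΔV k) = 0) := by
  have halign : ∀ k j, v k j ⬝ᵥ M k (t k j) *ᵥ lam ≤ (1 + σ k) * f k (v k j) := fun k j =>
    dotProduct_le_mul_of_dualNorm_le (hnonneg k _) (hHolder k _ _) (hdual k _ (ht k j))
  have hslack : ∀ k, ∑ j, (1 + σ k) * f k (v k j) ≤ ∑ j, f k (v k j) + ΔV k * σ k := by
    intro k
    rw [← Finset.mul_sum]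
    nlinarith [hσ k, hbudget k]
  have hgap : ∑ k, ∑ j, v k j ⬝ᵥ M k (t k j) *ᵥ lam =
      ∑ k, (∑ j, f k (v k j) + ΔV k * σ k) := by
    have hdualObj : lam ⬝ᵥ b = ∑ k, ∑ j, v k j ⬝ᵥ M k (t k j) *ᵥ lam := by
      simp only [hb, dotProduct_sum, dotProduct_transpose_mulVec]
    rw [← hdualObj, Finset.sum_add_distrib, ← heq]
    exact (sub_add_cancel _ _).symm
  have htight := Finset.eq_and_eq_of_sum_eq_of_le_of_le
    (fun k _ => Finset.sum_le_sum fun j _ => halign k j) (fun k _ => hslack k) hgap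
  refine ⟨fun k j => ?_, fun k => ?_⟩
  · exact (Finset.sum_eq_sum_iff_of_le fun j _ => halign k j).1
      (htight k (Finset.mem_univ k)).1 j (Finset.mem_univ j)
  · have hk := (htight k (Finset.mem_univ k)).2
    rw [← Finset.mul_sum] at hk
    linarith

theorem strong_duality_alignment
    {nx nu N : ℕ}
    (b : Fin nx → ℝ)
    (T : Fin N → Set ℝ)
    (M : Fin N → ℝ → Matrix (Fin nu) (Fin nx) ℝ)
    (f : Fin N → ((Fin nu → ℝ) → ℝ))
    (hnonneg : ∀ k u, 0 ≤ f k u)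
    (hdef : ∀ k u, f k u = 0 ↔ u = 0)
    (hhom : ∀ k (α : ℝ), 0 ≤ α → ∀ u, f k (α • u) = α * f k u)
    (htri : ∀ k u₁ u₂, f k (u₁ + u₂) ≤ f k u₁ + f k u₂)
    -- Hölder inequality for each norm and its dual
    (hHolder : ∀ k (v y : Fin nu → ℝ),
      ∑ i, v i * y i ≤ f k v * dualNorm (f k) y)
    (ΔV : Fin N → ℝ) (hΔV : ∀ k, 0 ≤ ΔV k)
    -- dual-feasible point
    (lam : Fin nx → ℝ) (σ : Fin N → ℝ) (hσ : ∀ k, 0 ≤ σ k)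
    (hdual : ∀ k, ∀ t ∈ T k,
      dualNorm (f k) ((M k t).mulVec lam) ≤ 1 + σ k)
    -- primal-feasible impulse set
    (m : Fin N → ℕ)
    (t : (k : Fin N) → Fin (m k) → ℝ) (ht : ∀ k j, t k j ∈ T k)
    (v : (k : Fin N) → Fin (m k) → (Fin nu → ℝ))
    (hbudget : ∀ k, ∑ j, f k (v k j) ≤ ΔV k)
    (hb : b = ∑ k, ∑ j, (M k (t k j)).transpose.mulVec (v k j))
    -- equality of dual objective and primal cost
    (heq : (∑ i, lam i * b i) - ∑ k, ΔV k * σ k = ∑ k, ∑ j, f k (v k j)) :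
    (∀ k j, ∑ i, v k j i * (M k (t k j)).mulVec lam i =
      (1 + σ k) * f k (v k j)) ∧
    (∀ k, σ k * ((∑ j, f k (v k j)) - ΔV k) = 0) :=
  strong_duality_alignment_general b T M f hnonneg hHolder ΔV lam σ hσ hdual m t ht v hbudget hb heq
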